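/- Let X ⊆ ℝ^p, Y ⊆ ℝ^q, A : ℝ^p → ℝ^q a linear map, η ≥ 0, and D = {(x, A x + n) : x ∈ X, ‖n‖₂ ≤ η, A x + n ∈ Y}. Let f : ℝ^q → ℝ^p be continuously differentiable with Λ_{f∘a} = sup over y in the convex hull of Y of ‖J(y)∘A‖₂ and Λ_f = sup over y in the convex hull of Y of ‖J(y)‖₂. Then for any δ > 0 and any two samples s₁ = (x₁, y₁), s₂ = (x₂, y₂) ∈ D with ‖x₁ − x₂‖₂ ≤ δ, the losses l(f, s) = ‖f(y) − x‖₂ satisfy |l(f, s₁) − l(f, s₂)| ≤ (1 + Λ_{f∘a})·δ + 2η·Λ_f. -/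

import Mathlib

/-!
Write `yᵢ = A xᵢ + nᵢ`. By the triangle inequality the two losses differ by at most
`‖f y₁ - f y₂‖ + ‖x₁ - x₂‖`. The mean value inequality along the segment `[y₂, y₁]`, which lies
in the convex hull of `Y`, bounds `‖f y₁ - f y₂‖` by the supremum over that segment of
`‖J(y) (y₁ - y₂)‖`, and splitting `y₁ - y₂ = A (x₁ - x₂) + (n₁ - n₂)` bounds this by
`Λ_{f∘a} ‖x₁ - x₂‖ + Λ_f ‖n₁ - n₂‖ ≤ Λ_{f∘a} δ + 2 η Λ_f`.
-/

open Set

theorem le_biSup_of_bddAbove_image {α β : Type*} [ConditionallyCompleteLattice β]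
    {s : Set α} {g : α → β} (hbd : BddAbove (g '' s)) {c : α} (hc : c ∈ s) :
    g c ≤ ⨆ y ∈ s, g y :=
  le_ciSup₂ (f := fun y (_ : y ∈ s) => g y)
    (hbd.mono <| iUnion_subset fun _ => range_subset_iff.2 fun hy => mem_image_of_mem g hy) c hc

theorem abs_norm_sub_sub_norm_sub_le {E : Type*} [SeminormedAddCommGroup E] (a b x₁ x₂ : E) :
    |‖a - x₁‖ - ‖b - x₂‖| ≤ ‖a - b‖ + ‖x₁ - x₂‖ :=
  calc |‖a - x₁‖ - ‖b - x₂‖| ≤ ‖(a - x₁) - (b - x₂)‖ := abs_norm_sub_norm_le _ _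
    _ = ‖(a - b) - (x₁ - x₂)‖ := by rw [sub_sub_sub_comm]
    _ ≤ ‖a - b‖ + ‖x₁ - x₂‖ := norm_sub_le _ _

section NormedSpace

variable {E F : Type*} [NormedAddCommGroup E] [NormedSpace ℝ E]
  [NormedAddCommGroup F] [NormedSpace ℝ F]

theorem Convex.norm_image_sub_le_of_norm_fderiv_apply_sub_le {f : E → F} {s : Set E}
    (hs : Convex ℝ s) (hf : ∀ z ∈ s, DifferentiableAt ℝ f z) {x y : E} (hx : x ∈ s)
    (hy : y ∈ s) {C : ℝ} (bound : ∀ z ∈ s, ‖fderiv ℝ f z (y - x)‖ ≤ C) :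
    ‖f y - f x‖ ≤ C := by
  have hseg : ∀ t ∈ Icc (0 : ℝ) 1, x + t • (y - x) ∈ s := fun t ht =>
    hs.add_smul_sub_mem hx hy ht
  have hderiv : ∀ t ∈ Icc (0 : ℝ) 1, HasDerivWithinAt (fun t : ℝ => f (x + t • (y - x)))
      (fderiv ℝ f (x + t • (y - x)) (y - x)) (Icc 0 1) t := by
    intro t ht
    have hline : HasDerivAt (fun t : ℝ => x + t • (y - x)) (y - x) t := by
      simpa using ((hasDerivAt_id t).smul_const (y - x)).const_add x
    exact ((hf _ (hseg t ht)).hasFDerivAt.comp_hasDerivAt t hline).hasDerivWithinAt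
  simpa using norm_image_sub_le_of_norm_deriv_le_segment_01' hderiv
    fun t ht => bound _ (hseg t (Ico_subset_Icc_self ht))

variable {G : Type*} [NormedAddCommGroup G] [NormedSpace ℝ G]

theorem ContinuousLinearMap.norm_apply_map_add_le (L : F →L[ℝ] G) (A : E →L[ℝ] F) (u : E)
    (w : F) : ‖L (A u + w)‖ ≤ ‖L.comp A‖ * ‖u‖ + ‖L‖ * ‖w‖ :=
  calc ‖L (A u + w)‖ = ‖L.comp A u + L w‖ := by rw [map_add, comp_apply]
    _ ≤ ‖L.comp A u‖ + ‖L w‖ := norm_add_le _ _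
    _ ≤ ‖L.comp A‖ * ‖u‖ + ‖L‖ * ‖w‖ := add_le_add ((L.comp A).le_opNorm u) (L.le_opNorm w)

end NormedSpace

theorem loss_difference_bound_of_close_general {p q : ℕ}
    (X : Set (EuclideanSpace ℝ (Fin p))) (Y : Set (EuclideanSpace ℝ (Fin q)))
    (A : EuclideanSpace ℝ (Fin p) →L[ℝ] EuclideanSpace ℝ (Fin q))
    (η : ℝ)
    (D : Set (EuclideanSpace ℝ (Fin p) × EuclideanSpace ℝ (Fin q)))
    (hD : D = {s | ∃ x ∈ X, ∃ n : EuclideanSpace ℝ (Fin q),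
        ‖n‖ ≤ η ∧ A x + n ∈ Y ∧ s = (x, A x + n)})
    (f : EuclideanSpace ℝ (Fin q) → EuclideanSpace ℝ (Fin p))
    (hf : ContDiff ℝ 1 f)
    (Λfa Λf : ℝ)
    (hbda : BddAbove ((fun y => ‖(fderiv ℝ f y).comp A‖) '' convexHull ℝ Y))
    (hbdf : BddAbove ((fun y => ‖fderiv ℝ f y‖) '' convexHull ℝ Y))
    (hΛfa : Λfa = ⨆ y ∈ convexHull ℝ Y, ‖(fderiv ℝ f y).comp A‖)
    (hΛf : Λf = ⨆ y ∈ convexHull ℝ Y, ‖fderiv ℝ f y‖)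
    (δ : ℝ)
    (s₁ s₂ : EuclideanSpace ℝ (Fin p) × EuclideanSpace ℝ (Fin q))
    (hs₁ : s₁ ∈ D) (hs₂ : s₂ ∈ D) (hclose : ‖s₁.1 - s₂.1‖ ≤ δ) :
    |‖f s₁.2 - s₁.1‖ - ‖f s₂.2 - s₂.1‖| ≤ (1 + Λfa) * δ + 2 * η * Λf := by
  subst hD
  obtain ⟨x₁, -, n₁, hn₁, hy₁, rfl⟩ := hs₁
  obtain ⟨x₂, -, n₂, hn₂, hy₂, rfl⟩ := hs₂
  have hnoise : ‖n₁ - n₂‖ ≤ 2 * η := by linarith [norm_sub_le n₁ n₂]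
  have hsignal : ‖f (A x₁ + n₁) - f (A x₂ + n₂)‖ ≤ Λfa * δ + Λf * (2 * η) := by
    refine (convex_convexHull ℝ Y).norm_image_sub_le_of_norm_fderiv_apply_sub_le
      (fun z _ => (hf.differentiable one_ne_zero).differentiableAt)
      (subset_convexHull ℝ Y hy₂) (subset_convexHull ℝ Y hy₁) fun z hz => ?_
    have hJA : ‖(fderiv ℝ f z).comp A‖ ≤ Λfa := hΛfa ▸ le_biSup_of_bddAbove_image hbda hz
    have hJ : ‖fderiv ℝ f z‖ ≤ Λf := hΛf ▸ le_biSup_of_bddAbove_image hbdf hz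
    have hsplit : A x₁ + n₁ - (A x₂ + n₂) = A (x₁ - x₂) + (n₁ - n₂) := by
      rw [map_sub]; abel
    rw [hsplit]
    refine ((fderiv ℝ f z).norm_apply_map_add_le A _ _).trans (add_le_add ?_ ?_)
    · exact mul_le_mul hJA hclose (norm_nonneg _) ((norm_nonneg _).trans hJA)
    · exact mul_le_mul hJ hnoise (norm_nonneg _) ((norm_nonneg _).trans hJ)
  calc _ ≤ ‖f (A x₁ + n₁) - f (A x₂ + n₂)‖ + ‖x₁ - x₂‖ := abs_norm_sub_sub_norm_sub_le _ _ _ _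
    _ ≤ Λfa * δ + Λf * (2 * η) + δ := add_le_add hsignal hclose
    _ = (1 + Λfa) * δ + 2 * η * Λf := by ring

/-- For samples `s₁ = (x₁, y₁)` and `s₂ = (x₂, y₂)` in the sample space
`D = {(x, A x + n) : x ∈ X, ‖n‖ ≤ η, A x + n ∈ Y}` with `‖x₁ − x₂‖ ≤ δ`, the losses
`l(f,(x,y)) = ‖f(y) − x‖` satisfy `|l(f,s₁) − l(f,s₂)| ≤ (1 + Λfa) δ + 2 η Λf`, where `Λfa`
and `Λf` are the suprema over the convex hull of `Y` of `‖J(y)∘A‖` and `‖J(y)‖`. -/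
theorem loss_difference_bound_of_close {p q : ℕ}
    (X : Set (EuclideanSpace ℝ (Fin p))) (Y : Set (EuclideanSpace ℝ (Fin q)))
    (A : EuclideanSpace ℝ (Fin p) →L[ℝ] EuclideanSpace ℝ (Fin q))
    (η : ℝ) (hη : 0 ≤ η)
    (D : Set (EuclideanSpace ℝ (Fin p) × EuclideanSpace ℝ (Fin q)))
    (hD : D = {s | ∃ x ∈ X, ∃ n : EuclideanSpace ℝ (Fin q),
        ‖n‖ ≤ η ∧ A x + n ∈ Y ∧ s = (x, A x + n)})
    (f : EuclideanSpace ℝ (Fin q) → EuclideanSpace ℝ (Fin p))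
    (hf : ContDiff ℝ 1 f)
    (Λfa Λf : ℝ)
    (hbda : BddAbove ((fun y => ‖(fderiv ℝ f y).comp A‖) '' convexHull ℝ Y))
    (hbdf : BddAbove ((fun y => ‖fderiv ℝ f y‖) '' convexHull ℝ Y))
    (hΛfa : Λfa = ⨆ y ∈ convexHull ℝ Y, ‖(fderiv ℝ f y).comp A‖)
    (hΛf : Λf = ⨆ y ∈ convexHull ℝ Y, ‖fderiv ℝ f y‖)
    (δ : ℝ) (hδ : 0 < δ)
    (s₁ s₂ : EuclideanSpace ℝ (Fin p) × EuclideanSpace ℝ (Fin q))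
    (hs₁ : s₁ ∈ D) (hs₂ : s₂ ∈ D) (hclose : ‖s₁.1 - s₂.1‖ ≤ δ) :
    |‖f s₁.2 - s₁.1‖ - ‖f s₂.2 - s₂.1‖| ≤ (1 + Λfa) * δ + 2 * η * Λf :=
  loss_difference_bound_of_close_general X Y A η D hD f hf Λfa Λf hbda hbdf hΛfa hΛf δ s₁ s₂ hs₁ hs₂
    hclose
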